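/- For a finite poc-set P, the map a ↦ V(a) = {u ∈ VΓ(P) : a ∈ u} is an isomorphism of poc-sets from P onto the family {V(a)}_{a∈P} ordered by inclusion with complementation V(a)* = VΓ(P) \ V(a); in particular, a ≤ b in P if and only if V(a) ⊆ V(b). -/

import Mathlib

structure PocSet (P : Type*) [PartialOrder P] where
  zero : P
  zero_le : ∀ a : P, zero ≤ a
  star : P → P
  star_star : ∀ a : P, star (star a) = a
  star_anti : ∀ a b : P, a ≤ b → star b ≤ star a
  eq_zero_of_le_star : ∀ a : P, a ≤ star a → a = zero

namespace PocSet

variable {P : Type*} [PartialOrder P]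

/-- The maximum element `1 = 0*` of a poc-set. -/
def one (S : PocSet P) : P := S.star S.zero

/-- An element is proper if it is neither `0` nor `1`. -/
def Proper (S : PocSet P) (a : P) : Prop := a ≠ S.zero ∧ a ≠ S.one

/-- A subset is coherent if `a ≤ b*` holds for no two of its members. -/
def Coherent (S : PocSet P) (α : Set P) : Prop := ∀ a ∈ α, ∀ b ∈ α, ¬ a ≤ S.star b

/-- A vertex of `Γ(P)`: a coherent `*`-selection. -/
def IsVertex (S : PocSet P) (α : Set P) : Prop :=
  S.Coherent α ∧ ∀ a : P, a ∈ α ↔ S.star a ∉ α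

/-- The metric `Δ(u,v) = |u Δ v| / 2` on vertices. -/
noncomputable def delta (S : PocSet P) (u v : Set P) : ℝ :=
  ((symmDiff u v).ncard : ℝ) / 2

/-- The median of three sets. -/
def med (u v w : Set P) : Set P := (u ∩ v) ∪ (v ∩ w) ∪ (u ∩ w)

end PocSet

/-- A morphism of poc-sets: sends `0` to `0`, preserves order, commutes with `*`. -/
def IsPocMorphism {P Q : Type*} [PartialOrder P] [PartialOrder Q]
    (S : PocSet P) (T : PocSet Q) (f : P → Q) : Prop :=
  f S.zero = T.zero ∧ (∀ a b : P, a ≤ b → f a ≤ f b) ∧ ∀ a : P, f (S.star a) = T.star (f a)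

/-! If `a ≰ b`, the set `{a, b*}` is coherent; by Zorn it extends to a maximal coherent set, and
maximality forces that set to choose exactly one of `c, c*` for every `c`. The resulting vertex
lies in `V(a)` but not in `V(b)`. -/

namespace PocSet

variable {P : Type*} [PartialOrder P] (S : PocSet P)

lemma star_le_star_iff {a b : P} : S.star a ≤ S.star b ↔ b ≤ a :=
  ⟨fun h => by simpa only [S.star_star] using S.star_anti _ _ h, S.star_anti _ _⟩

lemma le_star_comm {a b : P} : a ≤ S.star b ↔ b ≤ S.star a := by
  rw [← S.star_le_star_iff, S.star_star]

lemma le_one (a : P) : a ≤ S.one :=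
  S.le_star_comm.mp (S.zero_le _)

lemma star_one : S.star S.one = S.zero :=
  S.star_star _

lemma star_eq_zero_iff {a : P} : S.star a = S.zero ↔ a = S.one :=
  ⟨fun h => by rw [one, ← h, S.star_star], fun h => h ▸ S.star_one⟩

lemma not_le_star_self_iff {a : P} : ¬ a ≤ S.star a ↔ a ≠ S.zero :=
  ⟨fun h h0 => h (h0 ▸ S.zero_le _), fun h h' => h (S.eq_zero_of_le_star _ h')⟩

variable {S}

lemma Coherent.zero_notMem {α : Set P} (hα : S.Coherent α) : S.zero ∉ α :=
  fun h => hα _ h _ h (S.zero_le _)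

lemma coherent_insert_iff {a : P} {α : Set P} :
    S.Coherent (insert a α) ↔ S.Coherent α ∧ a ≠ S.zero ∧ ∀ b ∈ α, ¬ a ≤ S.star b := by
  simp only [Coherent, Set.forall_mem_insert, ← S.not_le_star_self_iff]
  constructor
  · rintro ⟨⟨haa, hab⟩, hba⟩
    exact ⟨fun b hb => (hba b hb).2, haa, hab⟩
  · rintro ⟨hα, haa, hab⟩
    exact ⟨⟨haa, hab⟩, fun b hb => ⟨fun h => hab b hb (S.le_star_comm.mp h), hα b hb⟩⟩

lemma coherent_singleton_iff {a : P} : S.Coherent {a} ↔ a ≠ S.zero := by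
  simp only [Coherent, Set.mem_singleton_iff, forall_eq, S.not_le_star_self_iff]

lemma coherent_pair_iff {a b : P} :
    S.Coherent {a, b} ↔ a ≠ S.zero ∧ b ≠ S.zero ∧ ¬ a ≤ S.star b := by
  simp only [coherent_insert_iff, coherent_singleton_iff, Set.mem_singleton_iff, forall_eq]
  tauto

lemma IsVertex.star_mem_iff {u : Set P} (hu : S.IsVertex u) {a : P} : S.star a ∈ u ↔ a ∉ u := by
  rw [hu.2, S.star_star]

lemma IsVertex.mem_of_le {u : Set P} (hu : S.IsVertex u) {a b : P} (ha : a ∈ u) (hab : a ≤ b) :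
    b ∈ u := by
  by_contra hb
  exact hu.1 a ha _ (hu.star_mem_iff.mpr hb) (by rwa [S.star_star])

lemma one_mem_of_maximal_coherent {α : Set P} (hmax : Maximal S.Coherent α)
    (h10 : S.one ≠ S.zero) : S.one ∈ α := by
  refine hmax.mem_of_prop_insert (coherent_insert_iff.mpr ⟨hmax.1, h10, fun b hbα h => ?_⟩)
  have hb : S.star b = S.one := le_antisymm (S.le_one _) h
  have hb0 : b = S.zero := by simpa only [S.star_star] using S.star_eq_zero_iff.mpr hb
  exact hmax.1.zero_notMem (hb0 ▸ hbα)

lemma exists_le_star_of_maximal_coherent {α : Set P} (hmax : Maximal S.Coherent α)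
    (h10 : S.one ≠ S.zero) {a : P} (ha : a ∉ α) : ∃ c ∈ α, a ≤ S.star c := by
  by_contra! h
  have ha0 : a ≠ S.zero := fun ha0 =>
    h S.one (one_mem_of_maximal_coherent hmax h10) (by rw [ha0, S.star_one])
  exact ha (hmax.mem_of_prop_insert (coherent_insert_iff.mpr ⟨hmax.1, ha0, h⟩))

lemma isVertex_of_maximal_coherent {α : Set P} (hmax : Maximal S.Coherent α)
    (h10 : S.one ≠ S.zero) : S.IsVertex α := by
  refine ⟨hmax.1, fun a => ⟨fun ha hsa => hmax.1 _ ha _ hsa (by rw [S.star_star]), fun hsa => ?_⟩⟩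
  by_contra ha
  obtain ⟨c, hc, hac⟩ := exists_le_star_of_maximal_coherent hmax h10 ha
  obtain ⟨d, hd, hda⟩ := exists_le_star_of_maximal_coherent hmax h10 hsa
  exact hmax.1 d hd c hc ((S.star_le_star_iff.mp hda).trans hac)

lemma Coherent.sUnion_of_isChain {c : Set (Set P)} (hc : ∀ α ∈ c, S.Coherent α)
    (hchain : IsChain (· ⊆ ·) c) : S.Coherent (⋃₀ c) := by
  rintro a ⟨α, hα, ha⟩ b ⟨β, hβ, hb⟩
  rcases hchain.total hα hβ with h | h
  · exact hc β hβ a (h ha) b hb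
  · exact hc α hα a ha b (h hb)

lemma Coherent.exists_isVertex_superset {α : Set P} (hα : S.Coherent α)
    (h10 : S.one ≠ S.zero) : ∃ u, α ⊆ u ∧ S.IsVertex u := by
  obtain ⟨u, hαu, hmax⟩ := zorn_subset_nonempty {β | S.Coherent β}
    (fun c hc hchain _ => ⟨⋃₀ c, Coherent.sUnion_of_isChain hc hchain,
      fun _ => Set.subset_sUnion_of_mem⟩) α hα
  exact ⟨u, hαu, isVertex_of_maximal_coherent hmax h10⟩

lemma exists_isVertex_mem_notMem {a b : P} (hab : ¬ a ≤ b) :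
    ∃ u, S.IsVertex u ∧ a ∈ u ∧ b ∉ u := by
  have h10 : S.one ≠ S.zero := fun h => hab ((S.le_one a).trans (h ▸ S.zero_le b))
  have hcoh : S.Coherent {a, S.star b} := by
    refine coherent_pair_iff.mpr ⟨fun ha => hab (ha ▸ S.zero_le b), fun hb => ?_, ?_⟩
    · exact hab (S.star_eq_zero_iff.mp hb ▸ S.le_one a)
    · rwa [S.star_star]
  obtain ⟨u, hsub, hu⟩ := hcoh.exists_isVertex_superset h10
  exact ⟨u, hu, hsub (Set.mem_insert _ _), hu.star_mem_iff.mp (hsub (Set.mem_insert_of_mem _ rfl))⟩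

variable (S)

/-- The halfspace `V(a)` of `Γ(P)`. -/
def halfspace (a : P) : Set {u : Set P // S.IsVertex u} := {u | a ∈ u.1}

lemma halfspace_subset_halfspace_iff {a b : P} : S.halfspace a ⊆ S.halfspace b ↔ a ≤ b := by
  refine ⟨fun h => ?_, fun hab u hu => u.2.mem_of_le hu hab⟩
  by_contra hab
  obtain ⟨u, hu, ha, hb⟩ := exists_isVertex_mem_notMem hab
  exact hb (h (show ⟨u, hu⟩ ∈ S.halfspace a from ha))

lemma halfspace_injective : Function.Injective S.halfspace := fun _ _ h =>
  le_antisymm (S.halfspace_subset_halfspace_iff.mp h.le) (S.halfspace_subset_halfspace_iff.mp h.ge)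

lemma halfspace_star (a : P) : S.halfspace (S.star a) = Set.univ \ S.halfspace a := by
  ext u
  simp only [halfspace, Set.mem_sdiff, Set.mem_univ, true_and, Set.mem_ofPred_eq]
  exact u.2.star_mem_iff

end PocSet

theorem stmt18_general {P : Type*} [PartialOrder P] (S : PocSet P) :
    Function.Injective
      (fun a : P => {u : {α : Set P // S.IsVertex α} | a ∈ u.1}) ∧
    (∀ a b : P, a ≤ b ↔
      {u : {α : Set P // S.IsVertex α} | a ∈ u.1} ⊆
        {u : {α : Set P // S.IsVertex α} | b ∈ u.1}) ∧
    (∀ a : P, {u : {α : Set P // S.IsVertex α} | S.star a ∈ u.1} =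
      Set.univ \ {u : {α : Set P // S.IsVertex α} | a ∈ u.1}) :=
  ⟨S.halfspace_injective, fun _ _ => S.halfspace_subset_halfspace_iff.symm, S.halfspace_star⟩

theorem stmt18 {P : Type*} [PartialOrder P] [Finite P] (S : PocSet P) :
    Function.Injective
      (fun a : P => {u : {α : Set P // S.IsVertex α} | a ∈ u.1}) ∧
    (∀ a b : P, a ≤ b ↔
      {u : {α : Set P // S.IsVertex α} | a ∈ u.1} ⊆
        {u : {α : Set P // S.IsVertex α} | b ∈ u.1}) ∧
    (∀ a : P, {u : {α : Set P // S.IsVertex α} | S.star a ∈ u.1} =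
      Set.univ \ {u : {α : Set P // S.IsVertex α} | a ∈ u.1}) :=
  stmt18_general S
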